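/- Let d ≥ 1 and consider an elliptic i.i.d. law ℙ on the environment space Ω such that for some r > 1, ℙ-almost surely ω(0,e_1) = r·ω(0,e_{1+d}). Let L ≥ 2, L̃ = 70L³, and B = B_{e_1,L,L̃}. Then the annealed probability that the walk started at 0 exits B through its bottom side satisfies P_0(X_{T_B}·e_1 = −L) ≤ Σ_{m=L}^∞ exp(−2m(r/(1+r) − 1/2)²). -/

import Mathlib

open MeasureTheory Filter Topology
open scoped ENNReal NNReal Classical BigOperators

namespace RWRE

/-- Sites of the lattice `ℤ^d`. -/
abbrev V (d : ℕ) := Fin d → ℤ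

/-- The `2d` canonical unit vectors: `dir d i = e_{i+1}` for `i < d`, and
`dir d i = -e_{i-d+1}` for `d ≤ i < 2d`. -/
def dir (d : ℕ) (i : Fin (2 * d)) : V d :=
  fun j => if (j : ℕ) = (i : ℕ) ∨ (j : ℕ) + d = (i : ℕ) then (if (i : ℕ) < d then 1 else -1) else 0

/-- The index of the direction opposite to direction `i`. -/
def opp {d : ℕ} (i : Fin (2 * d)) : Fin (2 * d) :=
  ⟨if (i : ℕ) < d then (i : ℕ) + d else (i : ℕ) - d, by have := i.isLt; split <;> omega⟩

/-- The set `𝒫` of probability vectors on the `2d` directions. -/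
abbrev Simplex (d : ℕ) := {p : Fin (2 * d) → ℝ // (∀ i, 0 ≤ p i) ∧ ∑ i, p i = 1}

/-- The environment space `Ω = 𝒫^{ℤ^d}`. -/
abbrev Env (d : ℕ) := V d → Simplex d

/-- The space of trajectories of the walk. -/
abbrev Traj (d : ℕ) := ℕ → V d

/-- Transition probability of the walk from `y` to `z` in environment `ω`. -/
noncomputable def trans (d : ℕ) (ω : Env d) (y z : V d) : ℝ :=
  ∑ i : Fin (2 * d), if z = y + dir d i then (ω y).1 i else 0

/-- `Pq` is the family of quenched laws: `Pq ω x` is a probability measure on trajectories,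
starting at `x`, whose cylinder probabilities are given by the products of the transition
probabilities of the environment `ω`. -/
def IsQuenchedLaw (d : ℕ) (Pq : Env d → V d → Measure (Traj d)) : Prop :=
  (∀ ω x, IsProbabilityMeasure (Pq ω x)) ∧
  ∀ (ω : Env d) (x : V d) (n : ℕ) (σ : ℕ → V d),
    (Pq ω x {f | ∀ k ≤ n, f k = σ k}).toReal =
      (if σ 0 = x then 1 else 0) * ∏ k ∈ Finset.range n, trans d ω (σ k) (σ (k + 1))

/-- The annealed (averaged) law `P_x = ∫ P_{x,ω} dℙ`. -/
noncomputable def annealed (d : ℕ) (ℙ : Measure (Env d)) (Pq : Env d → V d → Measure (Traj d))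
    (x : V d) : Measure (Traj d) :=
  ℙ.bind (fun ω => Pq ω x)

/-- `{ω(x) : x ∈ ℤ^d}` are i.i.d. under `ℙ`, with one-site marginal `μ`. -/
def IsIIDWith (d : ℕ) (ℙ : Measure (Env d)) (μ : Measure (Simplex d)) : Prop :=
  IsProbabilityMeasure ℙ ∧ IsProbabilityMeasure μ ∧
  ∀ (s : Finset (V d)) (A : V d → Set (Simplex d)), (∀ x, MeasurableSet (A x)) →
    ℙ {ω | ∀ x ∈ s, ω x ∈ A x} = ∏ x ∈ s, μ (A x)

/-- `{ω(x) : x ∈ ℤ^d}` are i.i.d. under `ℙ`. -/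
def IsIID (d : ℕ) (ℙ : Measure (Env d)) : Prop :=
  ∃ μ : Measure (Simplex d), IsIIDWith d ℙ μ

/-- `ℙ` is elliptic. -/
def IsElliptic (d : ℕ) (ℙ : Measure (Env d)) : Prop :=
  ∀ (x : V d) (i : Fin (2 * d)), ℙ {ω | 0 < (ω x).1 i} = 1

/-- First exit time from a set `A` (with value `0` by convention if the walk never leaves `A`). -/
noncomputable def exitTime (d : ℕ) (A : Set (V d)) (f : Traj d) : ℕ :=
  sInf {n | f n ∉ A}

/-- The coordinates of a site, as a real vector. -/
def toR (d : ℕ) (x : V d) : Fin d → ℝ := fun j => (x j : ℝ)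

/-- Euclidean inner product of a site with a real vector `l`. -/
noncomputable def dotl (d : ℕ) (l : Fin d → ℝ) (x : V d) : ℝ :=
  ∑ j, (x j : ℝ) * l j

/-- The first canonical basis vector `e_1` of `ℝ^d`. -/
def e1 (d : ℕ) : Fin d → ℝ := fun j => if (j : ℕ) = 0 then 1 else 0

/-- `R` is a rotation of `ℝ^d`: a linear automorphism preserving the Euclidean inner
product, with determinant one. -/
def IsRotation (d : ℕ) (R : (Fin d → ℝ) ≃ₗ[ℝ] (Fin d → ℝ)) : Prop :=
  (∀ u v : Fin d → ℝ, ∑ j, R u j * R v j = ∑ j, u j * v j) ∧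
    LinearMap.det (R : (Fin d → ℝ) →ₗ[ℝ] (Fin d → ℝ)) = 1

/-- The box `B_{l,L,L̃} = R((-L,L) × (-L̃,L̃)^{d-1}) ∩ ℤ^d`, where `R` is a rotation
with `R e_1 = l`. -/
def box (d : ℕ) (R : (Fin d → ℝ) ≃ₗ[ℝ] (Fin d → ℝ)) (L Lt : ℝ) : Set (V d) :=
  {x | ∀ j : Fin d,
    if (j : ℕ) = 0 then -L < R.symm (toR d x) j ∧ R.symm (toR d x) j < L
    else -Lt < R.symm (toR d x) j ∧ R.symm (toR d x) j < Lt}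

/-- The polynomial condition `(P)_M` in direction `l` on a box of size `L`. -/
def PolyCond (d : ℕ) (ℙ : Measure (Env d)) (Pq : Env d → V d → Measure (Traj d))
    (l : Fin d → ℝ) (M L : ℝ) : Prop :=
  ∃ Lt : ℝ, 0 < Lt ∧ Lt ≤ 70 * L ^ 3 ∧
  ∃ R : (Fin d → ℝ) ≃ₗ[ℝ] (Fin d → ℝ), IsRotation d R ∧ R (e1 d) = l ∧
    ((annealed d ℙ Pq 0) {f | dotl d l (f (exitTime d (box d R L Lt) f)) < L}).toReal ≤ 1 / L ^ M

/-- The quantity `η_α = max_{e ∈ U} 𝔼[ω(0,e)^{-α}]`. -/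
noncomputable def eta (d : ℕ) (ℙ : Measure (Env d)) (α : ℝ) : ℝ≥0∞ :=
  ⨆ i : Fin (2 * d), ∫⁻ ω, ENNReal.ofReal ((ω 0).1 i ^ (-α)) ∂ℙ

/-- `ᾱ = sup{α ≥ 0 : η_α < ∞}`. -/
noncomputable def alphaBar (d : ℕ) (ℙ : Measure (Env d)) : ℝ :=
  sSup {α : ℝ | 0 ≤ α ∧ eta d ℙ α < ⊤}

/-- The constant `c_0 = (2/3)·3^{120d⁴ + 3000d(log η_{ᾱ/2})²}`. -/
noncomputable def c0 (d : ℕ) (ℙ : Measure (Env d)) : ℝ :=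
  (2 / 3) * (3 : ℝ) ^ (120 * (d : ℝ) ^ 4 +
    3000 * (d : ℝ) * (Real.log (eta d ℙ (alphaBar d ℙ / 2)).toReal) ^ 2)

/-- The ellipticity condition `(E')_β`. -/
def CondE (d : ℕ) (ℙ : Measure (Env d)) (β : ℝ) : Prop :=
  ∃ α : Fin (2 * d) → ℝ, (∀ i, 0 < α i) ∧
    (∀ i, 2 * (∑ j, α j) - (α i + α (opp i)) > β) ∧
    ∀ i : Fin (2 * d),
      ∫⁻ ω, ∏ j ∈ Finset.univ.erase i, ENNReal.ofReal ((ω 0).1 j ^ (-(α j))) ∂ℙ < ⊤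


/-- First `n` with `P n`, as an extended natural number (`⊤` if there is none). -/
noncomputable def firstTime (P : ℕ → Prop) : ℕ∞ :=
  if ∃ n, P n then ((sInf {n | P n} : ℕ) : ℕ∞) else ⊤

/-- The triple `(S_k, R_k, M_k)` of the regeneration construction in direction `l`
with parameter `a`. -/
noncomputable def SR (d : ℕ) (l : Fin d → ℝ) (a : ℝ) (f : Traj d) : ℕ → ℕ∞ × ℕ∞ × ℝ
  | 0 => (0, 0, dotl d l (f 0))
  | (k + 1) =>
      let M := (SR d l a f k).2.2
      let S : ℕ∞ := firstTime fun n => M + a ≤ dotl d l (f n)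
      let s : ℕ := S.toNat
      let R : ℕ∞ := if S = ⊤ then ⊤ else
        S + firstTime fun n => dotl d l (f (s + n)) < dotl d l (f s)
      let M' : ℝ := sSup {r : ℝ | ∃ n : ℕ, (n : ℕ∞) ≤ R ∧ r = dotl d l (f n)}
      (S, R, M')

/-- The first regeneration time `τ_1` in direction `l` with parameter `a`. -/
noncomputable def tau1 (d : ℕ) (l : Fin d → ℝ) (a : ℝ) (f : Traj d) : ℕ∞ :=
  if _h : ∃ k : ℕ, 1 ≤ k ∧ (SR d l a f k).1 ≠ ⊤ ∧ (SR d l a f k).2.1 = ⊤ then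
    (SR d l a f (sInf {k : ℕ | 1 ≤ k ∧ (SR d l a f k).1 ≠ ⊤ ∧ (SR d l a f k).2.1 = ⊤})).1
  else ⊤

/-- The event `τ_1 > u` for a real threshold `u`. -/
def tau1Gt (d : ℕ) (l : Fin d → ℝ) (a : ℝ) (u : ℝ) : Set (Traj d) :=
  {f | ∀ k : ℕ, tau1 d l a f = (k : ℕ∞) → u < (k : ℝ)}

/-- `v` is the asymptotic direction of the walk under the law `P0`:
`X_n/|X_n|₂ → v` almost surely. -/
def HasAsympDir (d : ℕ) (P0 : Measure (Traj d)) (v : Fin d → ℝ) : Prop :=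
  ∀ᵐ f ∂P0, Tendsto
    (fun n => fun j : Fin d => (f n j : ℝ) / Real.sqrt (∑ j', ((f n j' : ℝ)) ^ 2))
    atTop (𝓝 v)

/-- `γ` is the centered Gaussian measure on `ι → ℝ` with covariance matrix `C`:
every linear functional pushes it forward to a one-dimensional centered Gaussian with
the corresponding variance. -/
def IsCenteredGaussian {ι : Type*} [Fintype ι] (γ : Measure (ι → ℝ)) (C : ι → ι → ℝ) : Prop :=
  ∀ u : ι → ℝ, γ.map (fun x => ∑ i, u i * x i) =
    ProbabilityTheory.gaussianReal 0 (Real.toNNReal (∑ i, ∑ j, u i * C i j * u j))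

/-- `ε^{1/2}(X_{⌊ε⁻¹n⌋} - ⌊ε⁻¹n⌋ v)` converges in law under `P0`, as `ε → 0`, to a Brownian
motion with non-degenerate covariance matrix `C`: the finite-dimensional distributions at any
times `t : Fin k → ℕ` converge weakly to the centered Gaussian with covariance
`min(t_p, t_q)·C`. -/
def CLTtoBM (d : ℕ) (P0 : Measure (Traj d)) (v : Fin d → ℝ)
    (Cmat : Matrix (Fin d) (Fin d) ℝ) : Prop :=
  ∀ (k : ℕ) (t : Fin k → ℕ),
    ∃ γ : Measure (Fin k × Fin d → ℝ), IsProbabilityMeasure γ ∧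
      IsCenteredGaussian γ (fun p q => (min (t p.1) (t q.1) : ℝ) * Cmat p.2 q.2) ∧
      ∀ g : BoundedContinuousFunction ((Fin k × Fin d) → ℝ) ℝ,
        Tendsto (fun ε : ℝ =>
            ∫ f : Traj d, g (fun p =>
              Real.sqrt ε * ((f (⌊(t p.1 : ℝ) / ε⌋₊) p.2 : ℝ) - (⌊(t p.1 : ℝ) / ε⌋₊ : ℝ) * v p.2))
              ∂P0)
          (𝓝[>] (0 : ℝ)) (𝓝 (∫ x, g x ∂γ))

/-- `μ` is the Dirichlet distribution with parameters `β` on the simplex, characterized by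
its (joint polynomial) moments. -/
def IsDirichlet (d : ℕ) (μ : Measure (Simplex d)) (β : Fin (2 * d) → ℝ) : Prop :=
  IsProbabilityMeasure μ ∧
  ∀ k : Fin (2 * d) → ℕ,
    ∫ p, ∏ i, (p.1 i) ^ (k i) ∂μ =
      (Real.Gamma (∑ i, β i) / Real.Gamma ((∑ i, β i) + (∑ i, (k i : ℝ)))) *
        ∏ i, (Real.Gamma (β i + k i) / Real.Gamma (β i))

/-! ### Directed graph structure on `ℤ^d` and flows -/

/-- Directed nearest-neighbour edges of `ℤ^d`: the pair `(z, i)` represents the edge from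
`z` to `z + dir d i`. -/
abbrev Edge (d : ℕ) := V d × Fin (2 * d)

def tail (d : ℕ) (e : Edge d) : V d := e.1

def head (d : ℕ) (e : Edge d) : V d := e.1 + dir d e.2

/-- Divergence of an edge function at a vertex. -/
noncomputable def divg (d : ℕ) (θ : Edge d → ℝ) (v : V d) : ℝ :=
  (∑ᶠ e ∈ {e : Edge d | tail d e = v}, θ e) - ∑ᶠ e ∈ {e : Edge d | head d e = v}, θ e

/-- `θ` is a flow from `A` to `Z` on the directed graph `(ℤ^d, E_{ℤ^d})`. -/
def IsFlow (d : ℕ) (θ : Edge d → ℝ) (A Z : Set (V d)) : Prop :=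
  (∀ e, 0 ≤ θ e) ∧ (∀ v, v ∉ A ∪ Z → divg d θ v = 0) ∧
    (∀ v ∈ A, 0 ≤ divg d θ v) ∧ (∀ v ∈ Z, divg d θ v ≤ 0)

/-- `θ` is a unit flow from `A` to `Z`. -/
def IsUnitFlow (d : ℕ) (θ : Edge d → ℝ) (A Z : Set (V d)) : Prop :=
  IsFlow d θ A Z ∧ ∑ᶠ v ∈ A, divg d θ v = 1


/-! ### Auxiliary machinery for the exit-through-bottom bound -/

def lvl (d : ℕ) (x : V d) : ℤ := if h : 0 < d then x ⟨0, h⟩ else 0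

def dlvl (d : ℕ) (i : Fin (2 * d)) : ℤ :=
  if (i : ℕ) = 0 then 1 else if (i : ℕ) = d then -1 else 0

lemma lvl_add (d : ℕ) (x y : V d) : lvl d (x + y) = lvl d x + lvl d y := by
  unfold lvl; split <;> simp

lemma lvl_zero (d : ℕ) : lvl d (0 : V d) = 0 := by unfold lvl; split <;> simp

lemma lvl_dir (d : ℕ) (hd : 1 ≤ d) (i : Fin (2 * d)) : lvl d (dir d i) = dlvl d i := by
  have hd0 : 0 < d := hd
  unfold lvl dir dlvl
  rw [dif_pos hd0]
  simp only
  by_cases h0 : (i : ℕ) = 0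
  · rw [if_pos (Or.inl h0.symm), if_pos (by omega), if_pos h0]
  · by_cases hdd : (i : ℕ) = d
    · rw [if_pos (Or.inr (by omega)), if_neg (by omega), if_neg h0, if_pos hdd]
    · rw [if_neg (by omega), if_neg h0, if_neg hdd]

lemma dir_injective (d : ℕ) : Function.Injective (dir d) := by
  intro i i' h
  apply Fin.ext
  by_contra hne
  have hi := i.isLt; have hi' := i'.isLt
  rcases lt_or_ge (i : ℕ) d with hlt | hge
  · have h1 := congrFun h ⟨i, hlt⟩
    simp only [dir] at h1
    split_ifs at h1 with hc hc2 hc3 <;> first | omega | exact hc (Or.inl trivial) | norm_num at h1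
  · have h1 := congrFun h ⟨(i : ℕ) - d, by omega⟩
    simp only [dir] at h1
    split_ifs at h1 with hc hc2 hc3 <;> first | omega | exact hc (Or.inl trivial) | norm_num at h1


/-! ### Words -/

def scons (d : ℕ) (i : Fin (2 * d)) (u : ℕ → Fin (2 * d)) : ℕ → Fin (2 * d) :=
  fun k => match k with
  | 0 => i
  | k + 1 => u k

@[simp] lemma scons_zero (d : ℕ) (i : Fin (2 * d)) (u : ℕ → Fin (2 * d)) :
    scons d i u 0 = i := rfl

@[simp] lemma scons_succ (d : ℕ) (i : Fin (2 * d)) (u : ℕ → Fin (2 * d)) (k : ℕ) :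
    scons d i u (k + 1) = u k := rfl

def extW (d N : ℕ) (i0 : Fin (2 * d)) (w : Fin N → Fin (2 * d)) : ℕ → Fin (2 * d) :=
  fun k => if h : k < N then w ⟨k, h⟩ else i0

lemma extW_cons (d N : ℕ) (i0 i : Fin (2 * d)) (w : Fin N → Fin (2 * d)) :
    extW d (N + 1) i0 (Fin.cons i w) = scons d i (extW d N i0 w) := by
  funext k
  cases k with
  | zero => simp [extW, scons]
  | succ m =>
    simp only [extW, scons]
    by_cases h : m < N
    · rw [dif_pos (by omega : m + 1 < N + 1), dif_pos h]
      have he : (⟨m + 1, by omega⟩ : Fin (N + 1)) = (⟨m, h⟩ : Fin N).succ := rfl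
      rw [he, Fin.cons_succ]
    · rw [dif_neg (by omega), dif_neg h]

def wpos (d : ℕ) (x : V d) (w : ℕ → Fin (2 * d)) (k : ℕ) : V d :=
  x + ∑ j ∈ Finset.range k, dir d (w j)

noncomputable def wpw (d : ℕ) (ω : Env d) (x : V d) (w : ℕ → Fin (2 * d)) (N : ℕ) : ℝ :=
  ∏ k ∈ Finset.range N, (ω (wpos d x w k)).1 (w k)

def whits (d : ℕ) (L : ℤ) (x : V d) (w : ℕ → Fin (2 * d)) (N : ℕ) : Prop :=
  ∃ n ≤ N, lvl d (wpos d x w n) = -L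

@[simp] lemma wpos_zero (d : ℕ) (x : V d) (w : ℕ → Fin (2 * d)) : wpos d x w 0 = x := by
  simp [wpos]

lemma wpos_succ (d : ℕ) (x : V d) (w : ℕ → Fin (2 * d)) (k : ℕ) :
    wpos d x w (k + 1) = wpos d x w k + dir d (w k) := by
  simp [wpos, Finset.sum_range_succ, add_assoc]

lemma wpos_scons (d : ℕ) (x : V d) (i : Fin (2 * d)) (u : ℕ → Fin (2 * d)) (k : ℕ) :
    wpos d x (scons d i u) (k + 1) = wpos d (x + dir d i) u k := by
  unfold wpos
  rw [Finset.sum_range_succ']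
  simp only [scons_succ, scons_zero]
  abel

lemma wpw_nonneg (d : ℕ) (ω : Env d) (x : V d) (w : ℕ → Fin (2 * d)) (N : ℕ) :
    0 ≤ wpw d ω x w N :=
  Finset.prod_nonneg fun k _ => (ω _).2.1 _

lemma wpw_scons (d : ℕ) (ω : Env d) (x : V d) (i : Fin (2 * d)) (u : ℕ → Fin (2 * d)) (N : ℕ) :
    wpw d ω x (scons d i u) (N + 1) = (ω x).1 i * wpw d ω (x + dir d i) u N := by
  unfold wpw
  rw [Finset.prod_range_succ']
  simp only [scons_succ, scons_zero, wpos_scons, wpos_zero]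
  ring

lemma whits_scons (d : ℕ) (L : ℤ) (x : V d) (i : Fin (2 * d)) (u : ℕ → Fin (2 * d)) (N : ℕ) :
    whits d L x (scons d i u) (N + 1) ↔ (lvl d x = -L ∨ whits d L (x + dir d i) u N) := by
  constructor
  · rintro ⟨n, hn, hl⟩
    cases n with
    | zero => left; simpa using hl
    | succ m => right; exact ⟨m, by omega, by rw [← wpos_scons]; exact hl⟩
  · rintro (h | ⟨m, hm, hl⟩)
    · exact ⟨0, by omega, by simpa using h⟩
    · exact ⟨m + 1, by omega, by rw [wpos_scons]; exact hl⟩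

lemma sum_cons (d N : ℕ) (i0 : Fin (2 * d)) (F : (ℕ → Fin (2 * d)) → ℝ) :
    ∑ w : Fin (N + 1) → Fin (2 * d), F (extW d (N + 1) i0 w) =
      ∑ i : Fin (2 * d), ∑ w : Fin N → Fin (2 * d), F (scons d i (extW d N i0 w)) := by
  rw [← (Fin.consEquiv (fun _ : Fin (N + 1) => Fin (2 * d))).sum_comp
      (fun w => F (extW d (N + 1) i0 w)), Fintype.sum_prod_type]
  exact Finset.sum_congr rfl fun i _ => Finset.sum_congr rfl fun w _ => by
    simp [Fin.consEquiv, extW_cons]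

lemma msum_le_one (d : ℕ) (ω : Env d) (i0 : Fin (2 * d)) :
    ∀ (N : ℕ) (x : V d), ∑ w : Fin N → Fin (2 * d), wpw d ω x (extW d N i0 w) N ≤ 1 := by
  intro N
  induction N with
  | zero => intro x; simp [wpw]
  | succ N ih =>
    intro x
    rw [sum_cons d N i0 (fun w => wpw d ω x w (N + 1))]
    simp only [wpw_scons]
    calc ∑ i : Fin (2 * d), ∑ w : Fin N → Fin (2 * d),
          (ω x).1 i * wpw d ω (x + dir d i) (extW d N i0 w) N
        = ∑ i : Fin (2 * d), (ω x).1 i *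
            ∑ w : Fin N → Fin (2 * d), wpw d ω (x + dir d i) (extW d N i0 w) N := by
          simp [Finset.mul_sum]
      _ ≤ ∑ i : Fin (2 * d), (ω x).1 i * 1 := by
          refine Finset.sum_le_sum fun i _ => ?_
          exact mul_le_mul_of_nonneg_left (ih (x + dir d i)) ((ω x).2.1 i)
      _ = 1 := by simpa using (ω x).2.2

lemma ssum_nonneg (d : ℕ) (ω : Env d) (i0 : Fin (2 * d)) (L : ℤ) (N : ℕ) (x : V d) :
    0 ≤ ∑ w : Fin N → Fin (2 * d),
      (if whits d L x (extW d N i0 w) N then wpw d ω x (extW d N i0 w) N else 0) :=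
  Finset.sum_nonneg fun w _ => by
    split
    · exact wpw_nonneg _ _ _ _ _
    · exact le_refl _

lemma ssum_le (d : ℕ) (hd : 1 ≤ d) (ω : Env d) (i0 i1 id1 : Fin (2 * d))
    (hi1 : (i1 : ℕ) = 0) (hid1 : (id1 : ℕ) = d)
    (r : ℝ) (hr : 1 < r) (hrel : ∀ y : V d, (ω y).1 i1 = r * (ω y).1 id1) (L : ℤ) :
    ∀ (N : ℕ) (x : V d), -L ≤ lvl d x →
      (∑ w : Fin N → Fin (2 * d),
        if whits d L x (extW d N i0 w) N then wpw d ω x (extW d N i0 w) N else 0) ≤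
      r⁻¹ ^ (L + lvl d x).toNat := by
  have hr0 : (0:ℝ) < r := by linarith
  intro N
  induction N with
  | zero =>
    intro x hx
    by_cases hxL : lvl d x = -L
    · have h0 : (L + lvl d x).toNat = 0 := by omega
      rw [h0, pow_zero]
      calc (∑ w : Fin 0 → Fin (2 * d),
            if whits d L x (extW d 0 i0 w) 0 then wpw d ω x (extW d 0 i0 w) 0 else 0)
          ≤ ∑ w : Fin 0 → Fin (2 * d), wpw d ω x (extW d 0 i0 w) 0 := by
            refine Finset.sum_le_sum fun w _ => ?_
            split
            · exact le_refl _
            · exact wpw_nonneg _ _ _ _ _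
        _ ≤ 1 := msum_le_one d ω i0 0 x
    · have hno : ∀ w : Fin 0 → Fin (2 * d), ¬ whits d L x (extW d 0 i0 w) 0 := by
        intro w ⟨n, hn, hl⟩
        interval_cases n
        simp at hl
        exact hxL hl
      calc _ = (0:ℝ) := by
            refine Finset.sum_eq_zero fun w _ => if_neg (hno w)
        _ ≤ _ := by positivity
  | succ N ih =>
    intro x hx
    by_cases hxL : lvl d x = -L
    · have h0 : (L + lvl d x).toNat = 0 := by omega
      rw [h0, pow_zero]
      calc (∑ w : Fin (N+1) → Fin (2 * d),
            if whits d L x (extW d (N+1) i0 w) (N+1) then wpw d ω x (extW d (N+1) i0 w) (N+1) else 0)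
          ≤ ∑ w : Fin (N+1) → Fin (2 * d), wpw d ω x (extW d (N+1) i0 w) (N+1) := by
            refine Finset.sum_le_sum fun w _ => ?_
            split
            · exact le_refl _
            · exact wpw_nonneg _ _ _ _ _
        _ ≤ 1 := msum_le_one d ω i0 (N+1) x
    · -- interior case
      have hlt : -L < lvl d x := lt_of_le_of_ne hx (fun h => hxL h.symm)
      set m := (L + lvl d x).toNat with hm
      have hm1 : 1 ≤ m := by omega
      rw [sum_cons d N i0 (fun w => if whits d L x w (N+1) then wpw d ω x w (N+1) else 0)]
      have hterm : ∀ i : Fin (2 * d), ∀ w : Fin N → Fin (2 * d),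
          (if whits d L x (scons d i (extW d N i0 w)) (N+1)
            then wpw d ω x (scons d i (extW d N i0 w)) (N+1) else 0)
          = (ω x).1 i * (if whits d L (x + dir d i) (extW d N i0 w) N
              then wpw d ω (x + dir d i) (extW d N i0 w) N else 0) := by
        intro i w
        rw [wpw_scons]
        by_cases h : whits d L (x + dir d i) (extW d N i0 w) N
        · rw [if_pos ((whits_scons d L x i _ N).2 (Or.inr h)), if_pos h]
        · rw [if_neg, if_neg h, mul_zero]
          intro hcon
          rcases (whits_scons d L x i _ N).1 hcon with h' | h'
          · exact hxL h'
          · exact h h'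
      simp only [hterm]
      have hB : ∀ i : Fin (2 * d),
          (∑ w : Fin N → Fin (2 * d), (ω x).1 i *
            (if whits d L (x + dir d i) (extW d N i0 w) N
              then wpw d ω (x + dir d i) (extW d N i0 w) N else 0))
          ≤ (ω x).1 i * r⁻¹ ^ (L + lvl d x + dlvl d i).toNat := by
        intro i
        rw [← Finset.mul_sum]
        have hlv : lvl d (x + dir d i) = lvl d x + dlvl d i := by
          rw [lvl_add, lvl_dir d hd]
        refine mul_le_mul_of_nonneg_left ?_ ((ω x).2.1 i)
        have := ih (x + dir d i) (by rw [hlv]; unfold dlvl; split_ifs <;> omega)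
        rw [hlv] at this
        rwa [show L + (lvl d x + dlvl d i) = L + lvl d x + dlvl d i by ring] at this
      calc _ ≤ ∑ i : Fin (2 * d), (ω x).1 i * r⁻¹ ^ (L + lvl d x + dlvl d i).toNat :=
            Finset.sum_le_sum fun i _ => hB i
        _ = r⁻¹ ^ m := by
            have hne : i1 ≠ id1 := by
              intro h; rw [h] at hi1; omega
            have hmem : id1 ∈ (Finset.univ.erase i1) :=
              Finset.mem_erase.2 ⟨fun h => hne h.symm, Finset.mem_univ _⟩
            rw [← Finset.add_sum_erase _ _ (Finset.mem_univ i1),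
                ← Finset.add_sum_erase _ _ hmem]
            have hrest : ∀ i ∈ (Finset.univ.erase i1).erase id1,
                (ω x).1 i * r⁻¹ ^ (L + lvl d x + dlvl d i).toNat = (ω x).1 i * r⁻¹ ^ m := by
              intro i hi
              rcases Finset.mem_erase.1 hi with ⟨hi2, hi3⟩
              rcases Finset.mem_erase.1 hi3 with ⟨hi4, _⟩
              have : dlvl d i = 0 := by
                unfold dlvl
                rw [if_neg, if_neg]
                · intro h; exact hi2 (Fin.ext (by omega))
                · intro h; exact hi4 (Fin.ext (by omega))
              rw [this]
              congr 2
              omega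
            rw [Finset.sum_congr rfl hrest, ← Finset.sum_mul]
            have hsum : ∑ i ∈ (Finset.univ.erase i1).erase id1, (ω x).1 i
                = 1 - (ω x).1 i1 - (ω x).1 id1 := by
              have h1 : (ω x).1 i1 + ∑ i ∈ Finset.univ.erase i1, (ω x).1 i = 1 := by
                rw [Finset.add_sum_erase _ _ (Finset.mem_univ i1)]; exact (ω x).2.2
              have h2 : (ω x).1 id1 + ∑ i ∈ (Finset.univ.erase i1).erase id1, (ω x).1 i
                  = ∑ i ∈ Finset.univ.erase i1, (ω x).1 i := by
                rw [Finset.add_sum_erase _ _ hmem]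
              linarith
            rw [hsum]
            have hd1 : dlvl d i1 = 1 := by unfold dlvl; rw [if_pos hi1]
            have hd2 : dlvl d id1 = -1 := by
              unfold dlvl; rw [if_neg (by omega), if_pos hid1]
            have hpow1 : (L + lvl d x + dlvl d i1).toNat = m + 1 := by rw [hd1]; omega
            have hpow2 : (L + lvl d x + dlvl d id1).toNat = m - 1 := by rw [hd2]; omega
            rw [hpow1, hpow2, hrel x]
            have hmm : m - 1 + 1 = m := by omega
            have hp2 : r⁻¹ ^ (m - 1) = r * r⁻¹ ^ m := by
              have : r⁻¹ ^ (m - 1) * (r⁻¹ * r) = r * r⁻¹ ^ m := by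
                rw [← mul_assoc, ← pow_succ, hmm]; ring
              rwa [inv_mul_cancel₀ (ne_of_gt hr0), mul_one] at this
            rw [hp2, pow_succ]
            field_simp
            ring

lemma trans_apply (d : ℕ) (ω : Env d) (y : V d) (i : Fin (2 * d)) :
    trans d ω y (y + dir d i) = (ω y).1 i := by
  unfold trans
  have hcg : ∀ i' ∈ Finset.univ, (if y + dir d i = y + dir d i' then (ω y).1 i' else 0)
      = (if i' = i then (ω y).1 i' else 0) := by
    intro i' _
    refine if_congr ?_ rfl rfl
    constructor
    · intro h; exact (dir_injective d (add_left_cancel h)).symm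
    · intro h; rw [h]
  rw [Finset.sum_congr rfl hcg, Finset.sum_ite_eq' Finset.univ i (ω y).1,
    if_pos (Finset.mem_univ i)]

section Quenched

variable {d : ℕ} {Pq : Env d → V d → Measure (Traj d)}

/-- measure of a cylinder set. -/
lemma cyl_measure (hQ : IsQuenchedLaw d Pq) (ω : Env d) (x : V d) (n : ℕ) (σ : ℕ → V d) :
    Pq ω x {f | ∀ k ≤ n, f k = σ k} =
      ENNReal.ofReal ((if σ 0 = x then 1 else 0) *
        ∏ k ∈ Finset.range n, trans d ω (σ k) (σ (k + 1))) := by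
  haveI := hQ.1 ω x
  rw [← hQ.2 ω x n σ, ENNReal.ofReal_toReal (measure_ne_top _ _)]

lemma start_zero (hQ : IsQuenchedLaw d Pq) (ω : Env d) (x : V d) : Pq ω x {f | f 0 ≠ x} = 0 := by
  haveI := hQ.1 ω x
  have h1 : Pq ω x {f : Traj d | f 0 = x} = 1 := by
    have h := cyl_measure hQ ω x 0 (fun _ => x)
    have hset : {f : Traj d | ∀ k ≤ 0, f k = (fun _ : ℕ => x) k} = {f : Traj d | f 0 = x} := by
      ext f; simp [Nat.le_zero]
    rw [hset] at h
    rw [h]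
    norm_num
  have hms : MeasurableSet {f : Traj d | f 0 = x} := by
    have : {f : Traj d | f 0 = x} = (fun f : Traj d => f 0) ⁻¹' {x} := rfl
    rw [this]
    exact measurable_pi_apply 0 (measurableSet_singleton x)
  have h2 : Pq ω x {f : Traj d | f 0 = x}ᶜ = 0 := by
    rw [measure_compl hms (measure_ne_top _ _), h1, measure_univ, tsub_self]
  have hc : {f : Traj d | f 0 ≠ x} = {f : Traj d | f 0 = x}ᶜ := rfl
  rw [hc]
  exact h2

lemma bad_step_zero (hQ : IsQuenchedLaw d Pq) (ω : Env d) (x : V d) (k : ℕ) :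
    Pq ω x {f : Traj d | ∀ i : Fin (2 * d), f (k + 1) ≠ f k + dir d i} = 0 := by
  haveI := hQ.1 ω x
  classical
  set T : (Fin (k + 2) → V d) → Set (Traj d) := fun σ =>
    if (∀ i : Fin (2 * d), σ ⟨k + 1, by omega⟩ ≠ σ ⟨k, by omega⟩ + dir d i) then
      {f : Traj d | ∀ j ≤ k + 1, f j = (fun j' : ℕ => if h : j' < k + 2 then σ ⟨j', h⟩ else 0) j}
    else ∅ with hT
  have hcover : {f : Traj d | ∀ i : Fin (2 * d), f (k + 1) ≠ f k + dir d i} ⊆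
      ⋃ σ : Fin (k + 2) → V d, T σ := by
    intro f hf
    simp only [Set.mem_setOf_eq] at hf
    refine Set.mem_iUnion.2 ⟨fun j => f j, ?_⟩
    rw [hT]
    simp only
    rw [if_pos hf]
    intro j hj
    rw [dif_pos (by omega : j < k + 2)]
  refine le_antisymm ?_ (by simp)
  refine le_trans (measure_mono hcover) (le_trans (measure_iUnion_le _) ?_)
  have hzero : ∀ σ : Fin (k + 2) → V d, Pq ω x (T σ) = 0 := by
    intro σ
    rw [hT]
    simp only
    split_ifs with hσ
    · set τ : ℕ → V d := fun j' => if h : j' < k + 2 then σ ⟨j', h⟩ else 0 with hτ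
      rw [cyl_measure hQ ω x (k + 1) τ]
      have hzero2 : trans d ω (τ k) (τ (k + 1)) = 0 := by
        refine Finset.sum_eq_zero fun i _ => if_neg ?_
        have h1 : τ (k + 1) = σ ⟨k + 1, by omega⟩ := by
          simp only [hτ]; rw [dif_pos (by omega : k + 1 < k + 2)]
        have h2 : τ k = σ ⟨k, by omega⟩ := by
          simp only [hτ]; rw [dif_pos (by omega : k < k + 2)]
        rw [h1, h2]
        exact hσ i
      rw [Finset.prod_eq_zero (Finset.self_mem_range_succ k) hzero2, mul_zero,
        ENNReal.ofReal_zero]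
    · simp
  simp [hzero]

lemma quenched_bound (hd : 1 ≤ d) (hQ : IsQuenchedLaw d Pq) (ω : Env d)
    (i1 id1 : Fin (2 * d)) (hi1 : (i1 : ℕ) = 0) (hid1 : (id1 : ℕ) = d)
    (r : ℝ) (hr : 1 < r) (hrel : ∀ y : V d, (ω y).1 i1 = r * (ω y).1 id1)
    (Lz : ℤ) (hLz : 0 ≤ Lz) :
    Pq ω 0 {f : Traj d | ∃ n, lvl d (f n) = -Lz} ≤ ENNReal.ofReal (r⁻¹ ^ Lz.toNat) := by
  haveI := hQ.1 ω 0
  classical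
  have hUnion : {f : Traj d | ∃ n, lvl d (f n) = -Lz} =
      ⋃ N : ℕ, {f : Traj d | ∃ n ≤ N, lvl d (f n) = -Lz} := by
    ext f
    simp only [Set.mem_setOf_eq, Set.mem_iUnion]
    constructor
    · rintro ⟨n, hn⟩; exact ⟨n, n, le_refl n, hn⟩
    · rintro ⟨N, n, _, hn⟩; exact ⟨n, hn⟩
  have hmono : Monotone (fun N : ℕ => {f : Traj d | ∃ n ≤ N, lvl d (f n) = -Lz}) := by
    intro a b hab f ⟨n, hn, h⟩
    exact ⟨n, le_trans hn hab, h⟩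
  rw [hUnion, (hmono.directed_le).measure_iUnion]
  refine iSup_le fun N => ?_
  -- junk set
  set Junk : Set (Traj d) := {f : Traj d |
    ¬ (f 0 = 0 ∧ ∀ k < N, ∃ i : Fin (2 * d), f (k + 1) = f k + dir d i)} with hJdef
  have hJunk : Pq ω 0 Junk = 0 := by
    have hsub : Junk ⊆ {f : Traj d | f 0 ≠ 0} ∪
        ⋃ k : Fin N, {f : Traj d | ∀ i : Fin (2 * d), f (k + 1) ≠ f k + dir d i} := by
      intro f hf
      simp only [hJdef, Set.mem_setOf_eq, not_and, not_forall] at hf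
      by_cases h0 : f 0 = 0
      · rcases hf h0 with ⟨k, hk⟩
        push_neg at hk
        rcases hk with ⟨hkN, hk2⟩
        exact Or.inr (Set.mem_iUnion.2 ⟨⟨k, hkN⟩, hk2⟩)
      · exact Or.inl h0
    refine le_antisymm (le_trans (measure_mono hsub) ?_) (by simp)
    refine le_trans (measure_union_le _ _) ?_
    rw [start_zero hQ ω 0, zero_add]
    refine le_trans (measure_iUnion_le _) ?_
    have : ∀ k : Fin N, Pq ω 0 {f : Traj d | ∀ i : Fin (2 * d), f (k + 1) ≠ f k + dir d i}
        = 0 := fun k => bad_step_zero hQ ω 0 k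
    simp [this]
  set U : (Fin N → Fin (2 * d)) → Set (Traj d) := fun w =>
    if whits d Lz 0 (extW d N i1 w) N then
      {f : Traj d | ∀ j ≤ N, f j = wpos d 0 (extW d N i1 w) j} else ∅ with hUdef
  have hcover : {f : Traj d | ∃ n ≤ N, lvl d (f n) = -Lz} ⊆
      Junk ∪ ⋃ w : Fin N → Fin (2 * d), U w := by
    intro f hf
    by_cases hJ : f ∈ Junk
    · exact Or.inl hJ
    · simp only [hJdef, Set.mem_setOf_eq, not_not] at hJ
      rcases hJ with ⟨h0, hstep⟩
      set w : Fin N → Fin (2 * d) := fun k => Classical.choose (hstep k k.isLt) with hwdef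
      have hpref : ∀ j, j ≤ N → f j = wpos d 0 (extW d N i1 w) j := by
        intro j
        induction j with
        | zero => intro _; simp [h0]
        | succ m ihm =>
          intro hm
          have hmN : m < N := by omega
          rw [wpos_succ, ← ihm (by omega)]
          have hspec := Classical.choose_spec (hstep m hmN)
          have hw : extW d N i1 w m = Classical.choose (hstep m hmN) := by
            rw [extW, dif_pos hmN]
          rw [hw]
          exact hspec
      have hwhits : whits d Lz 0 (extW d N i1 w) N := by
        rcases hf with ⟨n, hn, hl⟩
        exact ⟨n, hn, by rw [← hpref n hn]; exact hl⟩
      refine Or.inr (Set.mem_iUnion.2 ⟨w, ?_⟩)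
      rw [hUdef]
      simp only
      rw [if_pos hwhits]
      exact fun j hj => hpref j hj
  have hUval : ∀ w : Fin N → Fin (2 * d), Pq ω 0 (U w) =
      ENNReal.ofReal (if whits d Lz 0 (extW d N i1 w) N
        then wpw d ω 0 (extW d N i1 w) N else 0) := by
    intro w
    rw [hUdef]
    simp only
    split_ifs with hw
    · set τ : ℕ → V d := wpos d 0 (extW d N i1 w) with hτ
      rw [cyl_measure hQ ω 0 N τ]
      congr 1
      rw [if_pos (by rw [hτ, wpos_zero])]
      rw [one_mul]
      refine Finset.prod_congr rfl fun k _ => ?_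
      rw [hτ, wpos_succ, trans_apply]
    · simp
  calc Pq ω 0 {f : Traj d | ∃ n ≤ N, lvl d (f n) = -Lz}
      ≤ Pq ω 0 (Junk ∪ ⋃ w : Fin N → Fin (2 * d), U w) := measure_mono hcover
    _ ≤ Pq ω 0 Junk + Pq ω 0 (⋃ w : Fin N → Fin (2 * d), U w) := measure_union_le _ _
    _ ≤ 0 + ∑' w : Fin N → Fin (2 * d), Pq ω 0 (U w) := by
        rw [hJunk]
        exact add_le_add (le_refl 0) (measure_iUnion_le _)
    _ = ∑ w : Fin N → Fin (2 * d), Pq ω 0 (U w) := by rw [zero_add, tsum_fintype]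
    _ = ENNReal.ofReal (∑ w : Fin N → Fin (2 * d),
          if whits d Lz 0 (extW d N i1 w) N then wpw d ω 0 (extW d N i1 w) N else 0) := by
        rw [ENNReal.ofReal_sum_of_nonneg (fun w _ => by
          split
          · exact wpw_nonneg _ _ _ _ _
          · exact le_refl _)]
        exact Finset.sum_congr rfl fun w _ => hUval w
    _ ≤ ENNReal.ofReal (r⁻¹ ^ Lz.toNat) := by
        refine ENNReal.ofReal_le_ofReal ?_
        have := ssum_le d hd ω i1 i1 id1 hi1 hid1 r hr hrel Lz N 0
          (by rw [lvl_zero]; omega)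
        rw [lvl_zero, add_zero] at this
        exact this

end Quenched

lemma num_bound (r : ℝ) (hr : 1 < r) (L : ℕ) (hL : 1 ≤ L) :
    r⁻¹ ^ L ≤ ∑' m : ℕ, Real.exp (-2 * ((L : ℝ) + m) * (r / (1 + r) - 1 / 2) ^ 2) := by
  have hr0 : (0:ℝ) < r := by linarith
  have h1r : (0:ℝ) < 1 + r := by linarith
  set c : ℝ := r / (1 + r) - 1 / 2 with hc
  have hceq : c = (r - 1) / (2 * (1 + r)) := by rw [hc]; field_simp; ring
  have hcpos : 0 < c := by rw [hceq]; exact div_pos (by linarith) (by linarith)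
  clear_value c
  set g : ℕ → ℝ := fun m => Real.exp (-2 * ((L : ℝ) + m) * c ^ 2) with hg
  have hgeq : ∀ m, g m = Real.exp (-2 * (L : ℝ) * c ^ 2) * Real.exp (-2 * c ^ 2) ^ m := by
    intro m
    rw [hg]
    simp only
    rw [← Real.exp_nat_mul, ← Real.exp_add]
    congr 1
    ring
  have hsum : Summable g := by
    refine Summable.congr (Summable.mul_left _ (summable_geometric_of_lt_one
      (le_of_lt (Real.exp_pos _)) ?_)) fun m => (hgeq m).symm
    rw [Real.exp_lt_one_iff]
    nlinarith
  have hfirst : g 0 ≤ ∑' m, g m := by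
    have h5 := Summable.sum_le_tsum ({0} : Finset ℕ) (fun i _ => le_of_lt (Real.exp_pos _)) hsum
    rwa [Finset.sum_singleton] at h5
  have hlog : 2 * c ^ 2 ≤ Real.log r := by
    have h2 : Real.log r⁻¹ ≤ r⁻¹ - 1 := Real.log_le_sub_one_of_pos (by positivity)
    rw [Real.log_inv] at h2
    have h3 : 1 - r⁻¹ ≤ Real.log r := by linarith
    have e2 : 1 - r⁻¹ = (r - 1) / r := by field_simp
    have h4 : 2 * c ^ 2 ≤ 1 - r⁻¹ := by
      rw [e2, hceq, div_pow, mul_div_assoc', div_le_div_iff₀ (by positivity) hr0]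
      nlinarith [sq_nonneg (r - 1), sq_nonneg (1 + r), mul_pos (sub_pos.2 hr) hr0]
    linarith
  have hpow : r⁻¹ ^ L = Real.exp (-((L : ℝ) * Real.log r)) := by
    rw [← Real.exp_log (inv_pos.2 hr0), ← Real.exp_nat_mul, Real.log_inv]
    ring_nf
  have hL0 : (0:ℝ) ≤ (L : ℝ) := by positivity
  have hkey : r⁻¹ ^ L ≤ g 0 := by
    rw [hpow, hg]
    simp only [Nat.cast_zero, add_zero]
    rw [Real.exp_le_exp]
    have := mul_le_mul_of_nonneg_left hlog hL0
    nlinarith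
  exact le_trans hkey hfirst


lemma dotl_e1' (d : ℕ) (hd : 1 ≤ d) (y : V d) : dotl d (e1 d) y = ((lvl d y : ℤ) : ℝ) := by
  unfold dotl e1 lvl
  rw [dif_pos (show 0 < d from hd)]
  rw [Finset.sum_eq_single (⟨0, hd⟩ : Fin d)]
  · rw [if_pos rfl, mul_one]
  · intro j _ hj
    rw [if_neg, mul_zero]
    intro h
    exact hj (Fin.ext h)
  · intro h
    exact absurd (Finset.mem_univ _) h

/-- **Lemma (exit through the bottom of the box, marginal nestling case).**
If `ω(0,e₁) = r·ω(0,e_{1+d})` a.s. with `r > 1`, then for the box `B = B_{e₁,L,70L³}`,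
`P₀(X_{T_B}·e₁ = -L) ≤ Σ_{m=L}^∞ exp(-2m(r/(1+r) - 1/2)²)`. -/
theorem exit_bottom_bound
    (d : ℕ) (hd : 1 ≤ d)
    (ℙ : Measure (Env d)) (Pq : Env d → V d → Measure (Traj d))
    (hQ : IsQuenchedLaw d Pq) (hIID : IsIID d ℙ) (hEll : IsElliptic d ℙ)
    (r : ℝ) (hr : 1 < r)
    (hrel : ℙ {ω | (ω 0).1 ⟨0, by omega⟩ = r * (ω 0).1 ⟨d, by omega⟩} = 1)
    (L : ℕ) (hL : 2 ≤ L) :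
    ((annealed d ℙ Pq 0)
        {f | dotl d (e1 d)
            (f (exitTime d
              (box d (LinearEquiv.refl ℝ (Fin d → ℝ)) (L : ℝ) (70 * (L : ℝ) ^ 3)) f))
          = -(L : ℝ)}).toReal ≤
      ∑' m : ℕ, Real.exp (-2 * ((L : ℝ) + m) * (r / (1 + r) - 1 / 2) ^ 2) := by
  classical
  have hRHS0 : 0 ≤ ∑' m : ℕ, Real.exp (-2 * ((L : ℝ) + m) * (r / (1 + r) - 1 / 2) ^ 2) :=
    tsum_nonneg fun m => le_of_lt (Real.exp_pos _)
  by_cases hmeas : AEMeasurable (fun ω => Pq ω 0) ℙ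
  swap
  · have hzero : annealed d ℙ Pq 0 = 0 := by
      have hb : annealed d ℙ Pq 0 = ((ℙ.map fun ω => Pq ω 0)).join := rfl
      rw [hb, Measure.map_of_not_aemeasurable hmeas, Measure.join_zero]
    rw [hzero]
    simpa using hRHS0
  · set i1 : Fin (2 * d) := ⟨0, by omega⟩ with hi1def
    set id1 : Fin (2 * d) := ⟨d, by omega⟩ with hid1def
    set Hit : Set (Traj d) := {f : Traj d | ∃ n, lvl d (f n) = -(L : ℤ)} with hHitdef
    have hsubset : {f : Traj d | dotl d (e1 d)
        (f (exitTime d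
          (box d (LinearEquiv.refl ℝ (Fin d → ℝ)) (L : ℝ) (70 * (L : ℝ) ^ 3)) f))
        = -(L : ℝ)} ⊆ Hit := by
      intro f hf
      refine ⟨exitTime d (box d (LinearEquiv.refl ℝ (Fin d → ℝ)) (L : ℝ)
        (70 * (L : ℝ) ^ 3)) f, ?_⟩
      have h1 : dotl d (e1 d) (f (exitTime d
          (box d (LinearEquiv.refl ℝ (Fin d → ℝ)) (L : ℝ) (70 * (L : ℝ) ^ 3)) f))
          = -(L : ℝ) := hf
      rw [dotl_e1' d hd] at h1
      exact_mod_cast h1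
    have hHitMeas : MeasurableSet Hit := by
      rw [hHitdef]
      have heq : {f : Traj d | ∃ n, lvl d (f n) = -(L : ℤ)} =
          ⋃ n : ℕ, (fun f : Traj d => f n) ⁻¹' {y : V d | lvl d y = -(L : ℤ)} := by
        ext f
        simp [Set.mem_iUnion, Set.mem_preimage]
      rw [heq]
      refine MeasurableSet.iUnion fun n => ?_
      exact measurable_pi_apply n ((Set.to_countable _).measurableSet)
    set A : Set (Simplex d) := {p : Simplex d | p.1 i1 = r * p.1 id1} with hAdef
    have hAmeas : MeasurableSet A := by
      have h1 : Measurable fun p : Simplex d => p.1 i1 :=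
        (measurable_pi_apply i1).comp measurable_subtype_coe
      have h2 : Measurable fun p : Simplex d => r * p.1 id1 :=
        Measurable.const_mul (f := fun p : Simplex d => p.1 id1)
          ((measurable_pi_apply id1).comp measurable_subtype_coe) r
      exact measurableSet_eq_fun h1 h2
    obtain ⟨μ0, hProb, hμProb, hprod⟩ := hIID
    haveI := hProb
    have hsitemeas : ∀ x : V d, MeasurableSet {ω : Env d | ω x ∈ A} := by
      intro x
      have heq : {ω : Env d | ω x ∈ A} = (fun ω : Env d => ω x) ⁻¹' A := rfl
      rw [heq]
      exact measurable_pi_apply x hAmeas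
    have hsite : ∀ x : V d, ℙ {ω : Env d | ω x ∈ A} = μ0 A := by
      intro x
      have h := hprod {x} (fun _ => A) (fun _ => hAmeas)
      have hset : {ω : Env d | ∀ y ∈ ({x} : Finset (V d)), ω y ∈ A} =
          {ω : Env d | ω x ∈ A} := by
        ext ω; simp
      rw [hset] at h
      rw [h, Finset.prod_singleton]
    have hzero_site : ℙ {ω : Env d | ω 0 ∈ A} = 1 := hrel
    have hmargin : μ0 A = 1 := by rw [← hsite 0]; exact hzero_site
    have hae : ∀ᵐ ω ∂ℙ, ∀ x : V d, ω x ∈ A := by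
      rw [ae_all_iff]
      intro x
      have hx : ℙ {ω : Env d | ω x ∈ A}ᶜ = 0 := by
        rw [measure_compl (hsitemeas x) (measure_ne_top _ _), hsite x, hmargin,
          measure_univ, tsub_self]
      rw [ae_iff]
      exact hx
    have hq : ∀ᵐ ω ∂ℙ, Pq ω 0 Hit ≤ ENNReal.ofReal (r⁻¹ ^ L) := by
      filter_upwards [hae] with ω hω
      have hqb := quenched_bound hd hQ ω i1 id1 rfl rfl r hr (fun y => hω y) (L : ℤ)
        (by exact_mod_cast Nat.zero_le L)
      rw [hHitdef]
      simpa using hqb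
    have hann : annealed d ℙ Pq 0 Hit ≤ ENNReal.ofReal (r⁻¹ ^ L) := by
      have hb : annealed d ℙ Pq 0 Hit = ∫⁻ ω, Pq ω 0 Hit ∂ℙ := by
        have h1 : annealed d ℙ Pq 0 Hit = ((ℙ.map fun ω => Pq ω 0)).join Hit := rfl
        rw [h1, Measure.join_apply hHitMeas]
        exact lintegral_map' ((Measure.measurable_coe hHitMeas).aemeasurable) hmeas
      rw [hb]
      calc ∫⁻ ω, Pq ω 0 Hit ∂ℙ ≤ ∫⁻ _, ENNReal.ofReal (r⁻¹ ^ L) ∂ℙ := lintegral_mono_ae hq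
        _ = ENNReal.ofReal (r⁻¹ ^ L) := by rw [lintegral_const, measure_univ, mul_one]
    have hfinal : (annealed d ℙ Pq 0
        {f : Traj d | dotl d (e1 d)
          (f (exitTime d
            (box d (LinearEquiv.refl ℝ (Fin d → ℝ)) (L : ℝ) (70 * (L : ℝ) ^ 3)) f))
          = -(L : ℝ)}).toReal ≤ r⁻¹ ^ L := by
      refine ENNReal.toReal_le_of_le_ofReal (by positivity) ?_
      exact le_trans (measure_mono hsubset) hann
    exact le_trans hfinal (num_bound r hr L (by omega))
end RWRE
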